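/- arXiv:2409.14015 — 3 statements merged into one kernel-verified Lean document; each statement's English description precedes it below -/
import Mathlib

section
/- The 6-dimensional simplified shuffle-cube SSQ_6 is vertex-pancyclic: for every vertex u of SSQ_6 and every integer l with 3 ≤ l ≤ 32, there is a cycle of length l in SSQ_6 passing through u. -/
/-- Vertices of the `n`-dimensional simplified shuffle-cube: binary strings of
length `n` (encoded as functions `ℕ → Bool` vanishing from position `n` on)
such that for every `j` with `1 ≤ j ≤ (n-2)/4` the bits in positions
`4j+1` and `4j` are equal. -/
def SSQVertex (n : ℕ) : Type :=
  {u : ℕ → Bool // (∀ i, n ≤ i → u i = false) ∧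
    ∀ j, 1 ≤ j → j ≤ (n - 2) / 4 → u (4 * j + 1) = u (4 * j)}

/-- The set `V₀₀` = {1111, 0001, 0010, 0011} of 4-bit patterns
(most significant bit first). -/
def V00 : Set (Bool × Bool × Bool × Bool) :=
  {(true, true, true, true), (false, false, false, true),
   (false, false, true, false), (false, false, true, true)}

/-- The adjacency condition of the simplified shuffle-cube: either the two
strings agree everywhere except in exactly one of the bits in positions `1`
and `0`, or there is a `j` with `1 ≤ j ≤ (n-2)/4` such that the strings agree
outside the positions `4j-2, …, 4j+1` and the bitwise XOR of the `j`-th 4-bit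
blocks lies in `V₀₀`. -/
def ssqRel (n : ℕ) (u v : ℕ → Bool) : Prop :=
  ((∀ i, 2 ≤ i → u i = v i) ∧ ((u 0 = v 0) ↔ ¬ (u 1 = v 1))) ∨
  (∃ j, 1 ≤ j ∧ j ≤ (n - 2) / 4 ∧
    (∀ i, (i < 4 * j - 2 ∨ 4 * j + 1 < i) → u i = v i) ∧
    (xor (u (4 * j + 1)) (v (4 * j + 1)), xor (u (4 * j)) (v (4 * j)),
     xor (u (4 * j - 1)) (v (4 * j - 1)), xor (u (4 * j - 2)) (v (4 * j - 2))) ∈ V00)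

/-- The `n`-dimensional simplified shuffle-cube `SSQ_n`. -/
def SSQ (n : ℕ) : SimpleGraph (SSQVertex n) :=
  SimpleGraph.fromRel (fun u v => ssqRel n u.1 v.1)

/-!
Adjacency in `SSQ n` depends only on the bitwise XOR of the two endpoints, so XOR with a fixed
vertex is an automorphism and the graph is vertex-transitive: it suffices to find cycles of every
length through one vertex. `SSQ 6` is the Cayley graph of `(ℤ/2)⁵` for six generators, and a
cycle through the origin is a word in the generators whose prefix sums are pairwise distinct
and whose total sum vanishes; one such word of each length from 3 to 32 is checked by
evaluation.
-/

namespace SSQVertex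

variable {n : ℕ}

def xor (w u : SSQVertex n) : SSQVertex n :=
  ⟨fun i => (w.1 i ^^ u.1 i), fun i hi => by simp [w.2.1 i hi, u.2.1 i hi],
    fun j hj hj' => by simp [w.2.2 j hj hj', u.2.2 j hj hj']⟩

theorem xor_involutive (w : SSQVertex n) : Function.Involutive (xor w) := fun u =>
  Subtype.ext <| funext fun i => by simp [xor]

theorem xor_xor_cancel_right (u v : SSQVertex n) : xor (xor u v) u = v :=
  Subtype.ext <| funext fun i => by simp [xor, Bool.xor_comm (u.1 i)]

end SSQVertex

theorem ssqRel_xor_iff {n : ℕ} (w u v : ℕ → Bool) :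
    ssqRel n (fun i => (w i ^^ u i)) (fun i => (w i ^^ v i)) ↔ ssqRel n u v := by
  have cancel (a b c : Bool) : ((a ^^ b) ^^ (a ^^ c)) = (b ^^ c) := by
    cases a <;> cases b <;> cases c <;> rfl
  simp only [ssqRel, Bool.xor_right_inj, cancel]

namespace SSQ

variable {n : ℕ}

def translate (w : SSQVertex n) : SSQ n ≃g SSQ n where
  toEquiv := (SSQVertex.xor_involutive w).toPerm
  map_rel_iff' {u v} := by
    simp only [SSQ, SimpleGraph.fromRel_adj, Function.Involutive.coe_toPerm,
      (SSQVertex.xor_involutive w).injective.ne_iff]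
    exact and_congr_right fun _ => or_congr (ssqRel_xor_iff _ _ _) (ssqRel_xor_iff _ _ _)

theorem exists_iso_apply_eq (u v : SSQVertex n) : ∃ φ : SSQ n ≃g SSQ n, φ u = v :=
  ⟨translate (u.xor v), SSQVertex.xor_xor_cancel_right u v⟩

end SSQ

theorem SimpleGraph.Walk.isCycle_of_support_tail_nodup {V : Type*} {G : SimpleGraph V} {u : V}
    {p : G.Walk u u} (hp : p.support.tail.Nodup) (hl : 3 ≤ p.length) : p.IsCycle := by
  rw [isCycle_iff_isPath_tail_and_le_length, isPath_def,
    support_tail_of_not_nil _ (by rw [← length_eq_zero_iff]; omega)]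
  exact ⟨hp, hl⟩

namespace SSQ6

open SimpleGraph

/-- `(a, b₃, b₂, b₁, b₀)` encodes the string `a a b₃ b₂ b₁ b₀`. -/
abbrev Bits := Bool × Bool × Bool × Bool × Bool

def ofBits (s : Bits) : SSQVertex 6 :=
  ⟨fun i => match i with
    | 0 => s.2.2.2.2
    | 1 => s.2.2.2.1
    | 2 => s.2.2.1
    | 3 => s.2.1
    | 4 => s.1
    | 5 => s.1
    | _ + 6 => false,
    fun i hi => by obtain ⟨k, rfl⟩ := Nat.exists_eq_add_of_le' hi; rfl,
    fun j _ _ => by interval_cases j; rfl⟩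

theorem ofBits_injective : Function.Injective ofBits := by
  rintro ⟨a, b₃, b₂, b₁, b₀⟩ ⟨a', b₃', b₂', b₁', b₀'⟩ h
  have bit (i : ℕ) := congrArg (fun v : SSQVertex 6 => v.1 i) h
  simp only [ofBits] at bit
  simp [bit 0, bit 1, bit 2, bit 3, bit 4]

/-- Generators `2, 3, 4, 5` XOR `u₅u₄u₃u₂` with `0001, 0010, 0011, 1111 ∈ V₀₀`. -/
def move : Fin 6 → Bits → Bits
  | 0, (a, b₃, b₂, b₁, b₀) => (a, b₃, b₂, b₁, !b₀)
  | 1, (a, b₃, b₂, b₁, b₀) => (a, b₃, b₂, !b₁, b₀)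
  | 2, (a, b₃, b₂, b₁, b₀) => (a, b₃, !b₂, b₁, b₀)
  | 3, (a, b₃, b₂, b₁, b₀) => (a, !b₃, b₂, b₁, b₀)
  | 4, (a, b₃, b₂, b₁, b₀) => (a, !b₃, !b₂, b₁, b₀)
  | 5, (a, b₃, b₂, b₁, b₀) => (!a, !b₃, !b₂, b₁, b₀)

theorem adj_ofBits_move (g : Fin 6) (s : Bits) :
    (SSQ 6).Adj (ofBits s) (ofBits (move g s)) := by
  rw [SSQ, fromRel_adj]
  refine ⟨ofBits_injective.ne (by revert s; fin_cases g <;> decide), Or.inl ?_⟩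
  obtain ⟨a, b₃, b₂, b₁, b₀⟩ := s
  fin_cases g
  all_goals first
    | refine Or.inl ⟨fun i hi => ?_, ?_⟩
      · rcases i with _ | _ | _ | _ | _ | _ | i <;> first | omega | rfl
      · revert a b₃ b₂ b₁ b₀; decide
    | refine Or.inr ⟨1, le_rfl, le_rfl, fun i hi => ?_, ?_⟩
      · rcases i with _ | _ | _ | _ | _ | _ | i <;> first | omega | rfl
      · revert a b₃ b₂ b₁ b₀; simp [V00, ofBits, move]

def walkOf : (s : Bits) → (w : List (Fin 6)) →
    (SSQ 6).Walk (ofBits s) (ofBits (w.foldl (fun t g => move g t) s))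
  | _, [] => .nil
  | s, g :: w => .cons (adj_ofBits_move g s) (walkOf (move g s) w)

theorem length_walkOf (s : Bits) (w : List (Fin 6)) : (walkOf s w).length = w.length := by
  induction w generalizing s with
  | nil => rfl
  | cons g w ih => simp [walkOf, ih]

theorem support_walkOf (s : Bits) (w : List (Fin 6)) :
    (walkOf s w).support = (w.scanl (fun t g => move g t) s).map ofBits := by
  induction w generalizing s with
  | nil => rfl
  | cons g w ih => simp [walkOf, ih]

def origin : Bits := (false, false, false, false, false)

def IsCycleWord (w : List (Fin 6)) : Prop :=
  w.foldl (fun t g => move g t) origin = origin ∧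
    (w.scanl (fun t g => move g t) origin).tail.Nodup ∧ 3 ≤ w.length

instance : DecidablePred IsCycleWord := fun _ => by unfold IsCycleWord; infer_instance

theorem exists_isCycle_of_isCycleWord {w : List (Fin 6)} (hw : IsCycleWord w) :
    ∃ c : (SSQ 6).Walk (ofBits origin) (ofBits origin), c.IsCycle ∧ c.length = w.length := by
  obtain ⟨hclosed, hnodup, hlen⟩ := hw
  have hlength : ((walkOf origin w).copy rfl (congrArg ofBits hclosed)).length = w.length := by
    rw [Walk.length_copy, length_walkOf]
  refine ⟨_, Walk.isCycle_of_support_tail_nodup ?_ (hlength ▸ hlen), hlength⟩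
  rw [Walk.support_copy, support_walkOf, ← List.map_tail]
  exact hnodup.map ofBits_injective

/-- Generators `0, 1, 2, 3, 5` span a 5-cube, whose reflected Gray code is the word of length 32;
odd lengths need the chord `4 = 2 + 3`. -/
def cycleWord : ℕ → List (Fin 6)
  | 3 => [2, 3, 4]
  | 4 => [0, 1, 0, 1]
  | 5 => [0, 2, 0, 3, 4]
  | 6 => [0, 1, 0, 2, 1, 2]
  | 7 => [0, 1, 0, 2, 1, 3, 4]
  | 8 => [0, 1, 0, 2, 0, 1, 0, 2]
  | 9 => [0, 1, 0, 2, 0, 1, 0, 3, 4]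
  | 10 => [0, 1, 0, 2, 0, 1, 0, 3, 2, 3]
  | 11 => [0, 1, 0, 2, 0, 1, 0, 3, 5, 4, 5]
  | 12 => [0, 1, 0, 2, 0, 1, 0, 3, 0, 2, 0, 3]
  | 13 => [0, 1, 0, 2, 0, 1, 0, 3, 0, 5, 0, 4, 5]
  | 14 => [0, 1, 0, 2, 0, 1, 0, 3, 0, 1, 0, 2, 1, 3]
  | 15 => [0, 1, 0, 2, 0, 1, 0, 3, 0, 1, 0, 5, 1, 4, 5]
  | 16 => [0, 1, 0, 2, 0, 1, 0, 3, 0, 1, 0, 2, 0, 1, 0, 3]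
  | 17 => [0, 1, 0, 2, 0, 1, 0, 3, 0, 1, 0, 2, 1, 5, 2, 4, 5]
  | 18 => [0, 1, 0, 2, 0, 1, 0, 3, 0, 1, 0, 2, 0, 1, 0, 5, 3, 5]
  | 19 => [0, 1, 0, 2, 0, 1, 0, 3, 0, 1, 0, 2, 0, 1, 0, 5, 2, 4, 5]
  | 20 => [0, 1, 0, 2, 0, 1, 0, 3, 0, 1, 0, 2, 0, 1, 0, 5, 0, 3, 0, 5]
  | 21 => [0, 1, 0, 2, 0, 1, 0, 3, 0, 1, 0, 2, 0, 1, 0, 5, 0, 2, 0, 4, 5]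
  | 22 => [0, 1, 0, 2, 0, 1, 0, 3, 0, 1, 0, 2, 0, 1, 0, 5, 0, 1, 0, 3, 1, 5]
  | 23 => [0, 1, 0, 2, 0, 1, 0, 3, 0, 1, 0, 2, 0, 1, 0, 5, 0, 1, 0, 2, 1, 4, 5]
  | 24 => [0, 1, 0, 2, 0, 1, 0, 3, 0, 1, 0, 2, 0, 1, 0, 5, 0, 1, 0, 2, 1, 3, 2, 5]
  | 25 => [0, 1, 0, 2, 0, 1, 0, 3, 0, 1, 0, 2, 0, 1, 0, 5, 0, 1, 0, 2, 0, 1, 0, 4, 5]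
  | 26 => [0, 1, 0, 2, 0, 1, 0, 3, 0, 1, 0, 2, 0, 1, 0, 5, 0, 1, 0, 2, 0, 1, 0, 3, 2, 5]
  | 27 => [0, 1, 0, 2, 0, 1, 0, 3, 0, 1, 0, 2, 0, 1, 0, 5, 0, 1, 0, 2, 0, 1, 3, 0, 3, 4, 5]
  | 28 => [0, 1, 0, 2, 0, 1, 0, 3, 0, 1, 0, 2, 0, 1, 0, 5, 0, 1, 0, 2, 0, 1, 0, 3, 0, 2, 0, 5]
  | 29 => [0, 1, 0, 2, 0, 1, 0, 3, 0, 1, 0, 2, 0, 1, 0, 5, 0, 1, 0, 2, 0, 1, 3, 1, 0, 1, 3, 4, 5]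
  | 30 => [0, 1, 0, 2, 0, 1, 0, 3, 0, 1, 0, 2, 0, 1, 0, 5, 0, 1, 0, 2, 0, 1, 0, 3, 0, 1, 0, 2, 1, 5]
  | 31 => [0, 1, 0, 2, 0, 1, 0, 3, 0, 1, 0, 2, 0, 1, 0, 5,
      0, 1, 0, 2, 0, 1, 3, 1, 2, 0, 2, 1, 3, 4, 5]
  | 32 => [0, 1, 0, 2, 0, 1, 0, 3, 0, 1, 0, 2, 0, 1, 0, 5,
      0, 1, 0, 2, 0, 1, 0, 3, 0, 1, 0, 2, 0, 1, 0, 5]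
  | _ => []

theorem isCycleWord_cycleWord :
    ∀ l ≤ 32, 3 ≤ l → IsCycleWord (cycleWord l) ∧ (cycleWord l).length = l := by
  decide

end SSQ6

/-- The simplified shuffle-cube `SSQ₆` is vertex-pancyclic: every vertex lies
on a cycle of every length `l` with `3 ≤ l ≤ 32`. -/
theorem ssq6_vertexPancyclic (u : SSQVertex 6) (l : ℕ) (hl : 3 ≤ l)
    (hl' : l ≤ 32) :
    ∃ c : (SSQ 6).Walk u u, c.IsCycle ∧ c.length = l := by
  obtain ⟨hcycle, hlength⟩ := SSQ6.isCycleWord_cycleWord l hl' hl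
  obtain ⟨c, hc, hc_length⟩ := SSQ6.exists_isCycle_of_isCycleWord hcycle
  obtain ⟨φ, rfl⟩ := SSQ.exists_iso_apply_eq (SSQ6.ofBits SSQ6.origin) u
  refine ⟨c.map φ.toHom, hc.map φ.injective, ?_⟩
  rw [SimpleGraph.Walk.length_map, hc_length, hlength]
end

section
/- For every integer n with n ≥ 2 and n ≡ 2 (mod 4), the n-dimensional simplified shuffle-cube SSQ_n is n-regular: every vertex of SSQ_n has exactly n neighbours. -/
/-!
Adjacency in `SSQ n` depends only on the difference `u ∆ v`, and the admissible differences are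
`n` explicit masks: a flip of bit `0` or of bit `1`, or one of the four patterns of `V₀₀` written
into one of the `(n - 2) / 4` blocks. Every pattern of `V₀₀` has equal top bits, so flipping by a
mask keeps a vertex a vertex; the masks are nonzero and pairwise distinct, so the neighbours of
`u` are exactly the `n` distinct vertices `u ∆ mask`.
-/

open scoped symmDiff

namespace SSQ

abbrev Pattern := Bool × Bool × Bool × Bool

def block (j : ℕ) (d : ℕ → Bool) : Pattern :=
  (d (4 * j + 1), d (4 * j), d (4 * j - 1), d (4 * j - 2))

def blockMask (j : ℕ) (p : Pattern) (i : ℕ) : Bool :=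
  if i = 4 * j + 1 then p.1 else if i = 4 * j then p.2.1
  else if i = 4 * j - 1 then p.2.2.1 else if i = 4 * j - 2 then p.2.2.2 else false

lemma blockMask_of_lt_or_lt {j i : ℕ} (p : Pattern) (hi : i < 4 * j - 2 ∨ 4 * j + 1 < i) :
    blockMask j p i = false := by
  unfold blockMask
  split_ifs <;> first | rfl | omega

lemma blockMask_four_mul_add_one (j : ℕ) (p : Pattern) : blockMask j p (4 * j + 1) = p.1 := by
  simp [blockMask]

lemma blockMask_four_mul (j : ℕ) (p : Pattern) : blockMask j p (4 * j) = p.2.1 := by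
  simp [blockMask]

lemma block_blockMask {j : ℕ} (hj : 1 ≤ j) (p : Pattern) : block j (blockMask j p) = p := by
  simp only [block, blockMask]
  split_ifs <;> first | omega | rfl

lemma eq_blockMask_block_iff {j : ℕ} (hj : 1 ≤ j) (d : ℕ → Bool) :
    d = blockMask j (block j d) ↔ ∀ i, i < 4 * j - 2 ∨ 4 * j + 1 < i → d i = false := by
  refine ⟨fun h i hi => h ▸ blockMask_of_lt_or_lt _ hi, fun h => funext fun i => ?_⟩
  simp only [blockMask, block]
  split_ifs <;> first | (subst i; rfl) | exact h i (by omega)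

lemma exists_eq_blockMask_iff {j : ℕ} (hj : 1 ≤ j) (d : ℕ → Bool) :
    (∃ p ∈ V00, d = blockMask j p) ↔
      (∀ i, i < 4 * j - 2 ∨ 4 * j + 1 < i → d i = false) ∧ block j d ∈ V00 := by
  constructor
  · rintro ⟨p, hp, rfl⟩
    exact ⟨fun i hi => blockMask_of_lt_or_lt p hi, (block_blockMask hj p).symm ▸ hp⟩
  · rintro ⟨hd, hp⟩
    exact ⟨block j d, hp, (eq_blockMask_block_iff hj d).2 hd⟩

-- Every pattern of `V00` has a set bit in one of its two low positions, which pins down `j`.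
lemma exists_blockMask_eq_true {j : ℕ} (hj : 1 ≤ j) {p : Pattern} (hp : p ∈ V00) :
    ∃ i, 4 * j - 2 ≤ i ∧ blockMask j p i = true := by
  have hlow : p.2.2.1 = true ∨ p.2.2.2 = true := by
    simp only [V00, Set.mem_insert_iff, Set.mem_singleton_iff] at hp
    rcases hp with rfl | rfl | rfl | rfl <;> simp
  rcases hlow with h | h
  · exact ⟨4 * j - 1, by omega, by simp only [blockMask]; split_ifs <;> omega⟩
  · exact ⟨4 * j - 2, le_rfl, by simp only [blockMask]; split_ifs <;> omega⟩

lemma le_of_blockMask_eq {j j' : ℕ} (hj' : 1 ≤ j') {p p' : Pattern} (hp' : p' ∈ V00)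
    (h : blockMask j p = blockMask j' p') : j' ≤ j := by
  obtain ⟨i, hi, hpi⟩ := exists_blockMask_eq_true hj' hp'
  by_contra! hlt
  rw [← h, blockMask_of_lt_or_lt p (by omega)] at hpi
  exact Bool.false_ne_true hpi

lemma ncard_V00 : V00.ncard = 4 := by
  simp [V00]

def lowMask (i : Fin 2) (t : ℕ) : Bool := decide (t = i)

lemma lowMask_of_two_le (i : Fin 2) {t : ℕ} (ht : 2 ≤ t) : lowMask i t = false := by
  simp only [lowMask, decide_eq_false_iff_not]
  omega

lemma exists_eq_lowMask_iff (d : ℕ → Bool) :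
    (∃ i, d = lowMask i) ↔ (∀ t, 2 ≤ t → d t = false) ∧ (d 0 = false ↔ ¬ d 1 = false) := by
  constructor
  · rintro ⟨i, rfl⟩
    refine ⟨fun t => lowMask_of_two_le i, ?_⟩
    fin_cases i <;> simp [lowMask]
  · rintro ⟨hd, h01⟩
    have hext : ∀ i : Fin 2, d 0 = lowMask i 0 → d 1 = lowMask i 1 → d = lowMask i :=
      fun i h0 h1 => funext fun
        | 0 => h0
        | 1 => h1
        | t + 2 => by rw [hd _ (by omega), lowMask_of_two_le i (by omega)]
    cases h0 : d 0
    · exact ⟨1, hext 1 h0 (by simpa [lowMask, h0] using h01)⟩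
    · exact ⟨0, hext 0 h0 (by simpa [lowMask, h0] using h01)⟩

lemma lowMask_ne_blockMask (i : Fin 2) {j : ℕ} (hj : 1 ≤ j) {p : Pattern} (hp : p ∈ V00) :
    lowMask i ≠ blockMask j p := by
  obtain ⟨t, ht, htrue⟩ := exists_blockMask_eq_true hj hp
  intro h
  rw [← h, lowMask_of_two_le i (by omega)] at htrue
  exact Bool.false_ne_true htrue

abbrev MaskIndex (m : ℕ) : Type := Fin 2 ⊕ Set.Icc 1 m × V00

def mask (m : ℕ) : MaskIndex m → ℕ → Bool
  | .inl i => lowMask i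
  | .inr (j, p) => blockMask j p

lemma ssqRel_iff (n : ℕ) (u v : ℕ → Bool) :
    ssqRel n u v ↔ ∃ x, u ∆ v = mask ((n - 2) / 4) x := by
  have heq : ∀ i, (u i = v i) ↔ (u ∆ v) i = false := by
    simp [Pi.symmDiff_apply, Bool.symmDiff_eq_xor]
  have hx : ∀ i, xor (u i) (v i) = (u ∆ v) i := by
    simp [Pi.symmDiff_apply, Bool.symmDiff_eq_xor]
  simp only [ssqRel, heq, hx]
  rw [Sum.exists, ← exists_eq_lowMask_iff]
  refine or_congr_right ⟨?_, ?_⟩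
  · rintro ⟨j, hj, hjm, hd⟩
    obtain ⟨p, hp, h⟩ := (exists_eq_blockMask_iff hj _).2 hd
    exact ⟨(⟨j, hj, hjm⟩, ⟨p, hp⟩), h⟩
  · rintro ⟨⟨⟨j, hj, hjm⟩, ⟨p, hp⟩⟩, h⟩
    exact ⟨j, hj, hjm, (exists_eq_blockMask_iff hj _).1 ⟨p, hp, h⟩⟩

lemma mask_injective (m : ℕ) : Function.Injective (mask m) := by
  intro x y h
  rcases x with i | ⟨⟨j, hj, _⟩, ⟨p, hp⟩⟩ <;> rcases y with i' | ⟨⟨j', hj', _⟩, ⟨p', hp'⟩⟩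
  · have := congrFun h i
    simp only [mask, lowMask, decide_true, Bool.true_eq, decide_eq_true_eq] at this
    exact congrArg Sum.inl (Fin.ext this)
  · exact absurd h (lowMask_ne_blockMask i hj' hp')
  · exact absurd h.symm (lowMask_ne_blockMask i' hj hp)
  · change blockMask j p = blockMask j' p' at h
    obtain rfl : j = j' :=
      le_antisymm (le_of_blockMask_eq hj hp h.symm) (le_of_blockMask_eq hj' hp' h)
    obtain rfl : p = p' := by
      simpa only [block_blockMask hj] using congrArg (block j) h
    rfl

lemma mask_ne_bot {m : ℕ} (x : MaskIndex m) : mask m x ≠ ⊥ := by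
  obtain ⟨i, hi⟩ : ∃ i, mask m x i = true := by
    rcases x with i | ⟨⟨j, hj, _⟩, ⟨p, hp⟩⟩
    · exact ⟨i, by simp [mask, lowMask]⟩
    · obtain ⟨i, -, hi⟩ := exists_blockMask_eq_true hj hp
      exact ⟨i, hi⟩
  exact fun h => Bool.false_ne_true (hi ▸ congrFun h i).symm

lemma mask_eq_false_of_le {n i : ℕ} (hn : 2 ≤ n) (hi : n ≤ i)
    (x : MaskIndex ((n - 2) / 4)) : mask ((n - 2) / 4) x i = false := by
  rcases x with k | ⟨⟨j, -, hj⟩, p⟩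
  · exact lowMask_of_two_le k (by omega)
  · exact blockMask_of_lt_or_lt (j := j) p (by omega)

lemma mask_four_mul_add_one {m j : ℕ} (hj : 1 ≤ j) (x : MaskIndex m) :
    mask m x (4 * j + 1) = mask m x (4 * j) := by
  rcases x with k | ⟨⟨j', hj', -⟩, ⟨p, hp⟩⟩
  · simp only [mask, lowMask_of_two_le k (show 2 ≤ 4 * j by omega),
      lowMask_of_two_le k (show 2 ≤ 4 * j + 1 by omega)]
  · change blockMask j' p (4 * j + 1) = blockMask j' p (4 * j)
    obtain rfl | hne := eq_or_ne j' j
    · have hp12 : p.1 = p.2.1 := by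
        simp only [V00, Set.mem_insert_iff, Set.mem_singleton_iff] at hp
        rcases hp with rfl | rfl | rfl | rfl <;> rfl
      rw [blockMask_four_mul_add_one, blockMask_four_mul, hp12]
    · rw [blockMask_of_lt_or_lt p (by omega), blockMask_of_lt_or_lt p (by omega)]

def flipMask {n : ℕ} (hn : 2 ≤ n) (u : SSQVertex n)
    (x : MaskIndex ((n - 2) / 4)) : SSQVertex n :=
  ⟨u.1 ∆ mask _ x,
    fun i hi => by simp [u.2.1 i hi, mask_eq_false_of_le hn hi],
    fun j hj hjm => by simp [u.2.2 j hj hjm, mask_four_mul_add_one hj]⟩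

lemma flipMask_injective {n : ℕ} (hn : 2 ≤ n) (u : SSQVertex n) :
    Function.Injective (flipMask hn u) :=
  fun _ _ h => mask_injective _ (symmDiff_right_injective u.1 (congrArg Subtype.val h))

lemma neighborSet_eq_range {n : ℕ} (hn : 2 ≤ n) (u : SSQVertex n) :
    (SSQ n).neighborSet u = Set.range (flipMask hn u) := by
  ext v
  simp only [SimpleGraph.mem_neighborSet, SSQ, SimpleGraph.fromRel_adj, ssqRel_iff,
    symmDiff_comm v.1, or_self, Set.mem_range]
  constructor
  · rintro ⟨-, x, hx⟩
    refine ⟨x, Subtype.ext ?_⟩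
    change u.1 ∆ mask _ x = v.1
    rw [← hx, symmDiff_symmDiff_cancel_left]
  · rintro ⟨x, rfl⟩
    refine ⟨fun h => mask_ne_bot x ?_, x, symmDiff_symmDiff_cancel_left _ _⟩
    exact symmDiff_eq_left.1 (congrArg Subtype.val h).symm

end SSQ

theorem ssq_regular_general (n : ℕ) (hmod : n % 4 = 2)
    (u : SSQVertex n) :
    ((SSQ n).neighborSet u).ncard = n := by
  have hn : 2 ≤ n := by omega
  rw [SSQ.neighborSet_eq_range hn, Set.ncard_range_of_injective (SSQ.flipMask_injective hn u),
    Nat.card_sum, Nat.card_prod, Nat.card_eq_fintype_card, Fintype.card_fin, Nat.card_coe_set_eq,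
    Nat.card_coe_set_eq, Set.ncard_Icc_nat, SSQ.ncard_V00]
  omega

/-- For every `n ≥ 2` with `n ≡ 2 (mod 4)`, the simplified shuffle-cube
`SSQ_n` is `n`-regular: every vertex has exactly `n` neighbours. -/
theorem ssq_regular (n : ℕ) (hn : 2 ≤ n) (hmod : n % 4 = 2)
    (u : SSQVertex n) :
    ((SSQ n).neighborSet u).ncard = n :=
  ssq_regular_general n hmod u
end

section
/- For every integer n with n ≥ 2 and n ≡ 2 (mod 4), the n-dimensional balanced shuffle-cube BSQ_n is n-regular: every vertex of BSQ_n has exactly n neighbours. -/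
/-- Vertices of the `n`-dimensional balanced shuffle-cube: all binary strings
of length `n` (encoded as functions `ℕ → Bool` vanishing from position `n` on). -/
def BSQVertex (n : ℕ) : Type :=
  {u : ℕ → Bool // ∀ i, n ≤ i → u i = false}

/-- The value, modulo 4, of the two-bit string `ab` (with `a` the more
significant bit). -/
def pairVal (a b : Bool) : ZMod 4 :=
  2 * (a.toNat : ZMod 4) + (b.toNat : ZMod 4)

/-- The adjacency condition of the balanced shuffle-cube `BSQ_{4k+2}`
(parametrised by `k`).  For `k = 0` (i.e. `BSQ₂`, a 4-cycle) two strings are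
adjacent iff they differ in exactly one of bits `0` and `1`.  For `n = 4k+6`,
two strings are adjacent iff either they lie in a common copy of `BSQ_{4k+2}`
(the top four bits agree) and are adjacent there, or they lie in different
copies, the last `n-4` bits agree, bits `u_{n-2}` and `v_{n-2}` differ,
`v_{n-1}v_{n-2} = u_{n-1}u_{n-2} ± 1 (mod 4)`, and
`v_{n-3}v_{n-4} = u_{n-3}u_{n-4} + (-1)^{u_{n-2}} (mod 4)` or
`v_{n-3}v_{n-4} = u_{n-3}u_{n-4}`. -/
def bsqRel : ℕ → (ℕ → Bool) → (ℕ → Bool) → Prop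
  | 0, u, v => ((u 0 = v 0) ↔ ¬ (u 1 = v 1))
  | k + 1, u, v =>
      ((∀ i, 4 * k + 2 ≤ i → i ≤ 4 * k + 5 → u i = v i) ∧ bsqRel k u v) ∨
      ((∀ i, i < 4 * k + 2 → u i = v i) ∧
        u (4 * k + 4) ≠ v (4 * k + 4) ∧
        (pairVal (v (4 * k + 5)) (v (4 * k + 4)) =
            pairVal (u (4 * k + 5)) (u (4 * k + 4)) + 1 ∨
          pairVal (v (4 * k + 5)) (v (4 * k + 4)) =
            pairVal (u (4 * k + 5)) (u (4 * k + 4)) - 1) ∧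
        (pairVal (v (4 * k + 3)) (v (4 * k + 2)) =
            pairVal (u (4 * k + 3)) (u (4 * k + 2)) +
              (if u (4 * k + 4) = true then -1 else 1) ∨
          pairVal (v (4 * k + 3)) (v (4 * k + 2)) =
            pairVal (u (4 * k + 3)) (u (4 * k + 2))))

lemma bsqRel_congr : ∀ (k : ℕ) (u v u' v' : ℕ → Bool),
    (∀ i, i < 4 * k + 2 → u i = u' i) → (∀ i, i < 4 * k + 2 → v i = v' i) →
    bsqRel k u v → bsqRel k u' v'
  | 0, u, v, u', v', hu, hv, h => by
      simp only [bsqRel] at h ⊢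
      rw [← hu 0 (by omega), ← hu 1 (by omega), ← hv 0 (by omega), ← hv 1 (by omega)]
      exact h
  | k + 1, u, v, u', v', hu, hv, h => by
      simp only [bsqRel] at h ⊢
      rcases h with ⟨htop, hrel⟩ | ⟨hlow, h4, h54, h32⟩
      · left
        refine ⟨fun i h1 h2 => ?_, bsqRel_congr k u v u' v'
          (fun i hi => hu i (by omega)) (fun i hi => hv i (by omega)) hrel⟩
        rw [← hu i (by omega), ← hv i (by omega)]; exact htop i h1 h2
      · right
        rw [← hu (4*k+2) (by omega), ← hu (4*k+3) (by omega), ← hu (4*k+4) (by omega),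
          ← hu (4*k+5) (by omega), ← hv (4*k+2) (by omega), ← hv (4*k+3) (by omega),
          ← hv (4*k+4) (by omega), ← hv (4*k+5) (by omega)]
        exact ⟨fun i hi => by rw [← hu i (by omega), ← hv i (by omega)]; exact hlow i hi,
          h4, h54, h32⟩

def crossCond (u2 u3 u4 u5 : Bool) (p : Bool × Bool × Bool × Bool) : Prop :=
  u4 ≠ p.2.2.1 ∧
  (pairVal p.2.2.2 p.2.2.1 = pairVal u5 u4 + 1 ∨
    pairVal p.2.2.2 p.2.2.1 = pairVal u5 u4 - 1) ∧
  (pairVal p.2.1 p.1 = pairVal u3 u2 + (if u4 = true then -1 else 1) ∨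
    pairVal p.2.1 p.1 = pairVal u3 u2)

instance : DecidablePred (crossCond u2 u3 u4 u5) := fun p => by
  unfold crossCond; infer_instance

lemma crossCount (u2 u3 u4 u5 : Bool) :
    (Finset.univ.filter (crossCond u2 u3 u4 u5)).card = 4 := by
  revert u2 u3 u4 u5; decide

lemma baseCount (a b : Bool) :
    (Finset.univ.filter (fun p : Bool × Bool => ((a = p.1) ↔ ¬ (b = p.2)))).card = 2 := by
  revert a b; decide

def Sset (k : ℕ) (u : ℕ → Bool) : Set (ℕ → Bool) :=
  {v | (∀ i, 4 * k + 2 ≤ i → v i = false) ∧ bsqRel k u v}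

lemma Sset_card : ∀ (k : ℕ) (u : ℕ → Bool),
    (Sset k u).Finite ∧ (Sset k u).ncard = 4 * k + 2
  | 0, u => by
      have hinj : Set.InjOn (fun v : ℕ → Bool => (v 0, v 1)) (Sset 0 u) := by
        rintro v ⟨hv, -⟩ w ⟨hw, -⟩ h
        simp only [Prod.mk.injEq] at h
        funext i
        match i with
        | 0 => exact h.1
        | 1 => exact h.2
        | (i+2) => rw [hv (i+2) (by omega), hw (i+2) (by omega)]
      have himg : (fun v : ℕ → Bool => (v 0, v 1)) '' (Sset 0 u) =
          ↑(Finset.univ.filter (fun p : Bool × Bool => ((u 0 = p.1) ↔ ¬ (u 1 = p.2)))) := by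
        ext p
        simp only [Set.mem_image, Finset.coe_filter, Finset.mem_univ, true_and,
          Set.mem_setOf_eq]
        constructor
        · rintro ⟨v, ⟨-, hrel⟩, rfl⟩
          exact hrel
        · intro hp
          refine ⟨fun i => if i = 0 then p.1 else if i = 1 then p.2 else false,
            ⟨fun i hi => by simp [show i ≠ 0 by omega, show i ≠ 1 by omega], ?_⟩, by simp⟩
          simpa [bsqRel] using hp
      have hfin : (Sset 0 u).Finite := by
        apply Set.Finite.of_finite_image _ hinj
        rw [himg]; exact (Finset.univ.filter _).finite_toSet
      refine ⟨hfin, ?_⟩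
      rw [← Set.ncard_image_of_injOn hinj, himg, Set.ncard_coe_finset, baseCount]
  | k + 1, u => by
      obtain ⟨ihfin, ihcard⟩ := Sset_card k u
      set A : Set (ℕ → Bool) := {v | (∀ i, 4 * (k+1) + 2 ≤ i → v i = false) ∧
        (∀ i, 4 * k + 2 ≤ i → i ≤ 4 * k + 5 → u i = v i) ∧ bsqRel k u v} with hA
      set B : Set (ℕ → Bool) := {v | (∀ i, 4 * (k+1) + 2 ≤ i → v i = false) ∧
        (∀ i, i < 4 * k + 2 → u i = v i) ∧
        crossCond (u (4*k+2)) (u (4*k+3)) (u (4*k+4)) (u (4*k+5))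
          (v (4*k+2), v (4*k+3), v (4*k+4), v (4*k+5))} with hB
      have hunion : Sset (k+1) u = A ∪ B := by
        ext v
        simp only [Sset, Set.mem_setOf_eq, Set.mem_union, hA, hB, bsqRel, crossCond]
        tauto
      -- A is in bijection with Sset k u via truncation
      have hAinj : Set.InjOn (fun v : ℕ → Bool =>
          (fun i => if i < 4 * k + 2 then v i else false : ℕ → Bool)) A := by
        rintro v ⟨hv, hv2, -⟩ w ⟨hw, hw2, -⟩ h
        funext i
        by_cases hi : i < 4 * k + 2
        · have := congrFun h i; simpa [hi] using this
        · by_cases hi2 : i ≤ 4 * k + 5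
          · rw [← hv2 i (by omega) hi2, ← hw2 i (by omega) hi2]
          · rw [hv i (by omega), hw i (by omega)]
      have hAimg : (fun v : ℕ → Bool =>
          (fun i => if i < 4 * k + 2 then v i else false : ℕ → Bool)) '' A = Sset k u := by
        ext w
        simp only [Set.mem_image, hA, Set.mem_setOf_eq, Sset]
        constructor
        · rintro ⟨v, ⟨hv, hv2, hrel⟩, rfl⟩
          refine ⟨fun i hi => by simp [show ¬ i < 4*k+2 by omega], ?_⟩
          exact bsqRel_congr k u v u _ (fun i hi => rfl)
            (fun i hi => by simp [hi]) hrel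
        · rintro ⟨hw, hrel⟩
          refine ⟨fun i => if i < 4 * k + 2 then w i else if i < 4 * k + 6 then u i
            else false, ⟨fun i hi => by simp [show ¬ i < 4*k+2 by omega,
              show ¬ i < 4*k+6 by omega], fun i h1 h2 => by
                simp [show ¬ i < 4*k+2 by omega, show i < 4*k+6 by omega], ?_⟩, ?_⟩
          · exact bsqRel_congr k u w u _ (fun i hi => rfl)
              (fun i hi => by simp [hi]) hrel
          · funext i
            by_cases hi : i < 4 * k + 2
            · simp [hi]
            · simp [hi, hw i (by omega)]
      have hAfin : A.Finite := by
        apply Set.Finite.of_finite_image _ hAinj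
        rw [hAimg]; exact ihfin
      have hAcard : A.ncard = 4 * k + 2 := by
        rw [← Set.ncard_image_of_injOn hAinj, hAimg, ihcard]
      -- B is in bijection with the crossCond filter
      have hBinj : Set.InjOn (fun v : ℕ → Bool =>
          (v (4*k+2), v (4*k+3), v (4*k+4), v (4*k+5))) B := by
        rintro v ⟨hv, hv2, -⟩ w ⟨hw, hw2, -⟩ h
        simp only [Prod.mk.injEq] at h
        obtain ⟨h2, h3, h4, h5⟩ := h
        funext i
        by_cases hi : i < 4 * k + 2
        · rw [← hv2 i hi, ← hw2 i hi]
        · by_cases hi2 : i < 4 * k + 6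
          · have : i = 4*k+2 ∨ i = 4*k+3 ∨ i = 4*k+4 ∨ i = 4*k+5 := by omega
            rcases this with rfl | rfl | rfl | rfl <;> assumption
          · rw [hv i (by omega), hw i (by omega)]
      have hBimg : (fun v : ℕ → Bool =>
          (v (4*k+2), v (4*k+3), v (4*k+4), v (4*k+5))) '' B =
          ↑(Finset.univ.filter (crossCond (u (4*k+2)) (u (4*k+3)) (u (4*k+4))
            (u (4*k+5)))) := by
        ext p
        simp only [Set.mem_image, hB, Set.mem_setOf_eq, Finset.coe_filter,
          Finset.mem_univ, true_and]
        constructor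
        · rintro ⟨v, ⟨-, -, hc⟩, rfl⟩
          exact hc
        · intro hp
          refine ⟨fun i => if i < 4 * k + 2 then u i else
            if i = 4*k+2 then p.1 else if i = 4*k+3 then p.2.1 else
            if i = 4*k+4 then p.2.2.1 else if i = 4*k+5 then p.2.2.2 else false,
            ⟨fun i hi => by simp [show ¬ i < 4*k+2 by omega, show i ≠ 4*k+2 by omega,
              show i ≠ 4*k+3 by omega, show i ≠ 4*k+4 by omega, show i ≠ 4*k+5 by omega],
             fun i hi => by simp [hi], ?_⟩, by simp⟩
          simpa using hp
      have hBfin : B.Finite := by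
        apply Set.Finite.of_finite_image _ hBinj
        rw [hBimg]; exact (Finset.univ.filter _).finite_toSet
      have hBcard : B.ncard = 4 := by
        rw [← Set.ncard_image_of_injOn hBinj, hBimg, Set.ncard_coe_finset, crossCount]
      have hdisj : Disjoint A B := by
        rw [Set.disjoint_left]
        rintro v ⟨-, hv2, -⟩ ⟨-, -, hc, -⟩
        exact hc (hv2 (4*k+4) (by omega) (by omega))
      refine ⟨hunion ▸ hAfin.union hBfin, ?_⟩
      rw [hunion, Set.ncard_union_eq hdisj hAfin hBfin, hAcard, hBcard]
      ring

lemma bsqRel_symm : ∀ (k : ℕ) (u v : ℕ → Bool), bsqRel k u v → bsqRel k v u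
  | 0, u, v, h => by simp only [bsqRel] at h ⊢; tauto
  | k + 1, u, v, h => by
      simp only [bsqRel] at h ⊢
      rcases h with ⟨htop, hrel⟩ | ⟨hlow, h4, h54, h32⟩
      · exact Or.inl ⟨fun i h1 h2 => (htop i h1 h2).symm, bsqRel_symm k u v hrel⟩
      · right
        refine ⟨fun i hi => (hlow i hi).symm, Ne.symm h4, ?_, ?_⟩
        · rcases h54 with h | h
          · right; rw [h]; ring
          · left; rw [h]; ring
        · have hb : v (4*k+4) = !(u (4*k+4)) := by
            cases h' : u (4*k+4) <;> cases h'' : v (4*k+4) <;> simp_all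
          rcases h32 with h | h
          · left; rw [h, hb]
            cases h' : u (4*k+4) <;> simp
          · right; rw [h]

lemma bsqRel_irrefl : ∀ (k : ℕ) (u : ℕ → Bool), ¬ bsqRel k u u
  | 0, u => by simp [bsqRel]
  | k + 1, u => by
      simp only [bsqRel]
      rintro (⟨-, h⟩ | ⟨-, h, -⟩)
      · exact bsqRel_irrefl k u h
      · exact h rfl

/-- The `n`-dimensional balanced shuffle-cube `BSQ_n` (for `n ≡ 2 (mod 4)`,
so that `n = 4k+2` with `k = (n-2)/4`). -/
def BSQ (n : ℕ) : SimpleGraph (BSQVertex n) :=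
  SimpleGraph.fromRel (fun u v => bsqRel ((n - 2) / 4) u.1 v.1)

/-- For every `n ≥ 2` with `n ≡ 2 (mod 4)`, the balanced shuffle-cube
`BSQ_n` is `n`-regular: every vertex has exactly `n` neighbours. -/
theorem bsq_regular (n : ℕ) (hn : 2 ≤ n) (hmod : n % 4 = 2)
    (u : BSQVertex n) :
    ((BSQ n).neighborSet u).ncard = n := by
  obtain ⟨k, rfl⟩ : ∃ k, n = 4 * k + 2 := ⟨n / 4, by omega⟩
  have hk : (4 * k + 2 - 2) / 4 = k := by omega
  have hadj : ∀ v : BSQVertex (4 * k + 2),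
      (BSQ (4 * k + 2)).Adj u v ↔ bsqRel k u.1 v.1 := by
    intro v
    simp only [BSQ, SimpleGraph.fromRel_adj, hk]
    constructor
    · rintro ⟨hne, h | h⟩
      · exact h
      · exact bsqRel_symm k _ _ h
    · intro h
      refine ⟨?_, Or.inl h⟩
      rintro rfl
      exact bsqRel_irrefl k u.1 h
  have hinj : Function.Injective (fun v : BSQVertex (4 * k + 2) => v.1) :=
    fun a b h => Subtype.ext h
  have himg : (fun v : BSQVertex (4 * k + 2) => v.1) ''
      ((BSQ (4 * k + 2)).neighborSet u) = Sset k u.1 := by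
    ext w
    simp only [Set.mem_image, SimpleGraph.mem_neighborSet, Sset, Set.mem_setOf_eq]
    constructor
    · rintro ⟨v, hadjv, rfl⟩
      exact ⟨v.2, (hadj v).mp hadjv⟩
    · rintro ⟨hw, hrel⟩
      exact ⟨⟨w, hw⟩, (hadj ⟨w, hw⟩).mpr hrel, rfl⟩
  rw [← Set.ncard_image_of_injective _ hinj, himg, (Sset_card k u.1).2]
end
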